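/- With single-peaked preferences and Bloc voting selecting k winners where k ≥ ⌈m/3⌉: if the winning set is an adjacent interval {C_i, ..., C_{i+k-1}} with m−2k+1 ≤ i ≤ k+1, then the winning set is Gehrlein-stable (every winner majority-defeats every non-winner). -/

import Mathlib

open Finset

/-- Each voter's preference is a strict total (linear) order on the candidates. -/
def StrictPrefs {m N : ℕ} (P : Fin N → Fin m → Fin m → Prop) : Prop :=
  ∀ v : Fin N, IsStrictTotalOrder (Fin m) (P v)

/-- Single-peakedness w.r.t. the left-right order on `Fin m`: for `i < j < k`,
no voter ranks both `C_i` and `C_k` above `C_j`. -/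
def SinglePeaked {m N : ℕ} (P : Fin N → Fin m → Fin m → Prop) : Prop :=
  ∀ (v : Fin N) (i j k : Fin m), i < j → j < k → ¬ (P v i j ∧ P v k j)

/-- Number of voters preferring `a` to `b`. -/
def prefCount {m N : ℕ} (P : Fin N → Fin m → Fin m → Prop)
    [∀ v a b, Decidable (P v a b)] (a b : Fin m) : ℕ :=
  (univ.filter fun v => P v a b).card

/-- `a` majority-defeats `b`: strictly more than `N/2` voters prefer `a` to `b`. -/
def Defeats {m N : ℕ} (P : Fin N → Fin m → Fin m → Prop)
    [∀ v a b, Decidable (P v a b)] (a b : Fin m) : Prop :=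
  2 * prefCount P a b > N

instance {m N : ℕ} (P : Fin N → Fin m → Fin m → Prop)
    [∀ v a b, Decidable (P v a b)] (a b : Fin m) : Decidable (Defeats P a b) :=
  inferInstanceAs (Decidable (2 * prefCount P a b > N))

/-- Voter `v` approves candidate `a` under Bloc voting with `k` winners:
`a` is among `v`'s top `k` candidates. -/
def Approves {m N : ℕ} (P : Fin N → Fin m → Fin m → Prop)
    [∀ v a b, Decidable (P v a b)] (k : ℕ) (v : Fin N) (a : Fin m) : Prop :=
  (univ.filter fun b => P v b a).card < k

instance {m N : ℕ} (P : Fin N → Fin m → Fin m → Prop)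
    [∀ v a b, Decidable (P v a b)] (k : ℕ) (v : Fin N) (a : Fin m) :
    Decidable (Approves P k v a) :=
  inferInstanceAs (Decidable ((univ.filter fun b => P v b a).card < k))

/-- Bloc score of candidate `a`: the number of voters who approve `a`. -/
def blocScore {m N : ℕ} (P : Fin N → Fin m → Fin m → Prop)
    [∀ v a b, Decidable (P v a b)] (k : ℕ) (a : Fin m) : ℕ :=
  (univ.filter fun v => Approves P k v a).card

/-- `W` is a winning set under Bloc voting with `k` winners (strict vote totals):
`W` has `k` members and each member has strictly more approvals than each non-member. -/
def IsWinningSet {m N : ℕ} (P : Fin N → Fin m → Fin m → Prop)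
    [∀ v a b, Decidable (P v a b)] (k : ℕ) (W : Finset (Fin m)) : Prop :=
  W.card = k ∧ ∀ w ∈ W, ∀ c ∉ W, blocScore P k w > blocScore P k c


/-!
Suppose `c` lies left of the winning interval `W = [a, a + k)` and some `w ∈ W` does not beat
`c`, so at least half of the voters prefer `c` to `w`. By single-peakedness each of them ranks
all of `c, …, a + k - 2` above the rightmost winner `r = a + k - 1`, hence does not approve `r`.
Each of them also prefers `d = a - 1` to `w`, so the candidates they rank above `d` lie either
all left of `d` (fewer than `a ≤ k` of them) or all strictly between `d` and `w` (fewer than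
`k`): they approve `d`. Then `d` scores at least as much as `r`, contradicting `r ∈ W`, `d ∉ W`.
A candidate right of `W` is handled by reversing the axis, where `m - 2k ≤ a` plays the role
of `a ≤ k`.
-/

section SinglePeaked

variable {m N : ℕ} {P : Fin N → Fin m → Fin m → Prop}

lemma StrictPrefs.prefers_of_not_prefers (hP : StrictPrefs P) (v : Fin N) {x y : Fin m}
    (hne : x ≠ y) (h : ¬ P v y x) : P v x y := by
  by_contra h'
  exact hne ((hP v).trichotomous x y h' h)

lemma StrictPrefs.not_prefers_of_prefers (hP : StrictPrefs P) (v : Fin N) {x y : Fin m}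
    (h : P v x y) : ¬ P v y x :=
  fun h' => (hP v).irrefl x ((hP v).trans x y x h h')

lemma SinglePeaked.not_prefers_both (hSP : SinglePeaked P) (v : Fin N) {x j y : Fin m}
    (hj : x < j ∧ j < y ∨ y < j ∧ j < x) : ¬ (P v x j ∧ P v y j) := by
  rcases hj with ⟨hxj, hjy⟩ | ⟨hyj, hjx⟩
  · exact hSP v x j y hxj hjy
  · exact fun h => hSP v y j x hyj hjx h.symm

lemma SinglePeaked.prefers_of_between (hP : StrictPrefs P) (hSP : SinglePeaked P) (v : Fin N)
    {x j y : Fin m} (hj : x < j ∧ j < y ∨ y < j ∧ j < x) (h : P v x y) : P v j y := by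
  have hjy : j ≠ y := hj.elim (fun h => h.2.ne) (fun h => h.1.ne')
  by_contra h'
  have hyj := hP.prefers_of_not_prefers v hjy.symm h'
  exact hSP.not_prefers_both v hj ⟨(hP v).trans x y j h hyj, hyj⟩

lemma SinglePeaked.upper_subset_Iio_or_Ioi [∀ v a b, Decidable (P v a b)]
    (hP : StrictPrefs P) (hSP : SinglePeaked P) (v : Fin N) (d : Fin m) :
    univ.filter (P v · d) ⊆ Iio d ∨ univ.filter (P v · d) ⊆ Ioi d := by
  by_contra h
  obtain ⟨⟨x, hx, hxd⟩, ⟨y, hy, hyd⟩⟩ := not_or.1 h |>.imp not_subset.1 not_subset.1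
  simp only [mem_filter, mem_univ, true_and, mem_Iio, mem_Ioi, not_lt] at hx hy hxd hyd
  have hdx : d < x := lt_of_le_of_ne hxd fun h => (hP v).irrefl d (h ▸ hx)
  have hyd : y < d := lt_of_le_of_ne hyd fun h => (hP v).irrefl d (h ▸ hy)
  exact hSP v y d x hyd hdx ⟨hy, hx⟩

end SinglePeaked

section Bloc

variable {m N : ℕ} {P : Fin N → Fin m → Fin m → Prop} [∀ v a b, Decidable (P v a b)]

lemma prefCount_add_prefCount (hP : StrictPrefs P) {a b : Fin m} (hab : a ≠ b) :
    prefCount P a b + prefCount P b a = N := by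
  have hsplit := card_filter_add_card_filter_not (s := (univ : Finset (Fin N))) (P · a b)
  rw [card_univ, Fintype.card_fin] at hsplit
  have hnot : univ.filter (fun v => ¬ P v a b) = univ.filter (P · b a) :=
    filter_congr fun v _ => ⟨hP.prefers_of_not_prefers v hab.symm, hP.not_prefers_of_prefers v⟩
  rwa [hnot] at hsplit

lemma defeats_of_approves_of_not_approves (hP : StrictPrefs P) {k : ℕ} {c w d r : Fin m}
    (hcw : c ≠ w) (happ : ∀ v, P v c w → Approves P k v d)
    (hnapp : ∀ v, P v c w → ¬ Approves P k v r)
    (hscore : blocScore P k d < blocScore P k r) : Defeats P w c := by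
  have hd : prefCount P c w ≤ blocScore P k d :=
    card_le_card fun v hv => by
      simp only [mem_filter, mem_univ, true_and] at hv ⊢
      exact happ v hv
  have hr : blocScore P k r ≤ prefCount P w c :=
    card_le_card fun v hv => by
      simp only [mem_filter, mem_univ, true_and] at hv ⊢
      exact hP.prefers_of_not_prefers v hcw.symm fun h => hnapp v h hv
  have hsum := prefCount_add_prefCount hP hcw
  unfold Defeats
  omega

lemma not_approves_of_prefers (hP : StrictPrefs P) (hSP : SinglePeaked P) (v : Fin N) {k : ℕ}
    {c w r : Fin m} (hcw : c < w) (hwr : w ≤ r)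
    (hk : k ≤ (r : ℕ) - c) (h : P v c w) : ¬ Approves P k v r := by
  have hcr : P v c r := by
    rcases hwr.eq_or_lt with rfl | hwr
    · exact h
    · exact (hP v).trans _ _ _ h <|
        hP.prefers_of_not_prefers v hwr.ne fun hrw => hSP v c w r hcw hwr ⟨h, hrw⟩
  have hsub : Ico c r ⊆ univ.filter (P v · r) := by
    intro j hj
    rw [mem_Ico] at hj
    rw [mem_filter]
    refine ⟨mem_univ _, ?_⟩
    rcases hj.1.eq_or_lt with rfl | hcj
    · exact hcr
    · exact hSP.prefers_of_between hP v (.inl ⟨hcj, hj.2⟩) hcr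
  have hcard := card_le_card hsub
  rw [Fin.card_Ico] at hcard
  unfold Approves
  omega

lemma approves_of_prefers (hP : StrictPrefs P) (hSP : SinglePeaked P) (v : Fin N) {k : ℕ}
    {c d w : Fin m} (hcd : c ≤ d) (hdw : d < w) (hdk : (d : ℕ) < k)
    (hwk : (w : ℕ) ≤ d + k) (h : P v c w) : Approves P k v d := by
  have hdw' : P v d w := by
    rcases hcd.eq_or_lt with rfl | hcd
    · exact h
    · exact hSP.prefers_of_between hP v (.inl ⟨hcd, hdw⟩) h
  unfold Approves
  rcases hSP.upper_subset_Iio_or_Ioi hP v d with hleft | hright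
  · calc _ ≤ #(Iio d) := card_le_card hleft
      _ < k := by rwa [Fin.card_Iio]
  · have hsub : univ.filter (P v · d) ⊆ Ioo d w := by
      intro x hx
      have hdx : d < x := mem_Ioi.1 (hright hx)
      rw [mem_filter] at hx
      refine mem_Ioo.2 ⟨hdx, lt_of_not_ge fun hwx => ?_⟩
      have hwd : P v w d := by
        rcases hwx.eq_or_lt with rfl | hwx
        · exact hx.2
        · exact hSP.prefers_of_between hP v (.inr ⟨hdw, hwx⟩) hx.2
      exact hP.not_prefers_of_prefers v hdw' hwd
    calc _ ≤ #(Ioo d w) := card_le_card hsub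
      _ < k := by rw [Fin.card_Ioo]; omega

theorem defeats_of_le_of_lt (hP : StrictPrefs P) (hSP : SinglePeaked P) {k : ℕ}
    {c d w r : Fin m} (hcd : c ≤ d) (hdw : d < w) (hwr : w ≤ r)
    (hdr : (d : ℕ) + k = r) (hdk : (d : ℕ) < k)
    (hscore : blocScore P k d < blocScore P k r) : Defeats P w c :=
  defeats_of_approves_of_not_approves hP (hcd.trans_lt hdw).ne
    (fun v => approves_of_prefers hP hSP v hcd hdw hdk (by omega))
    (fun v => not_approves_of_prefers hP hSP v (hcd.trans_lt hdw) hwr (by omega)) hscore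

end Bloc

section Reverse

variable {m N : ℕ} {P : Fin N → Fin m → Fin m → Prop}

def revProfile (P : Fin N → Fin m → Fin m → Prop) : Fin N → Fin m → Fin m → Prop :=
  fun v x y => P v x.rev y.rev

instance [∀ v a b, Decidable (P v a b)] (v : Fin N) (a b : Fin m) :
    Decidable (revProfile P v a b) :=
  inferInstanceAs (Decidable (P v a.rev b.rev))

lemma StrictPrefs.revProfile (hP : StrictPrefs P) : StrictPrefs (revProfile P) := fun v =>
  { trichotomous := fun _ _ h h' => Fin.rev_injective ((hP v).trichotomous _ _ h h')
    irrefl := fun x => (hP v).irrefl x.rev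
    trans := fun x y z => (hP v).trans x.rev y.rev z.rev }

lemma SinglePeaked.revProfile (hSP : SinglePeaked P) : SinglePeaked (revProfile P) :=
  fun v i j k hij hjk h =>
    hSP v k.rev j.rev i.rev (Fin.rev_lt_rev.2 hjk) (Fin.rev_lt_rev.2 hij) h.symm

variable [∀ v a b, Decidable (P v a b)]

lemma defeats_revProfile {a b : Fin m} : Defeats (revProfile P) a b ↔ Defeats P a.rev b.rev :=
  Iff.rfl

lemma approves_revProfile {k : ℕ} {v : Fin N} {a : Fin m} :
    Approves (revProfile P) k v a ↔ Approves P k v a.rev := by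
  unfold Approves
  rw [card_equiv (t := univ.filter (P v · a.rev)) Fin.revPerm fun b => by
    simp only [mem_filter, mem_univ, true_and, Fin.revPerm_apply]; rfl]

lemma blocScore_revProfile {k : ℕ} {a : Fin m} :
    blocScore (revProfile P) k a = blocScore P k a.rev := by
  simp only [blocScore, approves_revProfile]

end Reverse

/-- Candidate `C_i` of the paper is `⟨i - 1, _⟩ : Fin m`; so the paper's bounds
`m - 2k + 1 ≤ i ≤ k + 1` become `m - 2 * k ≤ a ≤ k` for the leftmost winner `a`. -/
theorem central_adjacent_winning_set_gehrlein_stable_general {m N : ℕ}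
    (P : Fin N → Fin m → Fin m → Prop) [∀ v a b, Decidable (P v a b)]
    (hP : StrictPrefs P) (hSP : SinglePeaked P)
    (k : ℕ)
    (W : Finset (Fin m)) (hWwin : IsWinningSet P k W)
    (a : Fin m)
    (hWa : ∀ x : Fin m, x ∈ W ↔ (a : ℕ) ≤ (x : ℕ) ∧ (x : ℕ) < (a : ℕ) + k)
    (hlo : m - 2 * k ≤ (a : ℕ)) (hhi : (a : ℕ) ≤ k) :
    ∀ w ∈ W, ∀ c ∉ W, Defeats P w c := by
  obtain ⟨hcard, hwin⟩ := hWwin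
  intro w hw c hc
  have ham : (a : ℕ) + k ≤ m := by
    have := card_le_card fun x hx => mem_Ici.2 (Fin.le_def.2 ((hWa x).1 hx).1)
    rw [Fin.card_Ici, hcard] at this
    omega
  rw [hWa] at hw hc
  rcases lt_or_ge (c : ℕ) a with hca | hac
  · obtain ⟨d, hd⟩ : ∃ d : Fin m, (d : ℕ) = a - 1 := ⟨⟨a - 1, by omega⟩, rfl⟩
    obtain ⟨r, hr⟩ : ∃ r : Fin m, (r : ℕ) = a + k - 1 :=
      ⟨⟨a + k - 1, by omega⟩, rfl⟩
    exact defeats_of_le_of_lt hP hSP (Fin.le_def.2 (by omega))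
      (Fin.lt_def.2 (by omega)) (Fin.le_def.2 (by omega)) (by omega) (by omega)
      (hwin r ((hWa r).2 (by omega)) d (by rw [hWa]; omega))
  · obtain ⟨d, hd⟩ : ∃ d : Fin m, (d : ℕ) = a + k := ⟨⟨a + k, by omega⟩, rfl⟩
    have := defeats_of_le_of_lt hP.revProfile hSP.revProfile (k := k)
      (c := c.rev) (d := d.rev) (w := w.rev) (r := a.rev)
      (Fin.rev_le_rev.2 (Fin.le_def.2 (by omega)))
      (Fin.rev_lt_rev.2 (Fin.lt_def.2 (by omega))) (Fin.rev_le_rev.2 (Fin.le_def.2 (by omega)))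
      (by simp only [Fin.val_rev]; omega) (by simp only [Fin.val_rev]; omega)
      (by simpa only [blocScore_revProfile, Fin.rev_rev] using
        hwin a ((hWa a).2 (by omega)) d (by rw [hWa]; omega))
    simpa only [defeats_revProfile, Fin.rev_rev] using this

/-- If `k ≥ ⌈m/3⌉` and the winning set is the adjacent interval
`{C_i, ..., C_{i+k-1}}` with `m - 2k + 1 ≤ i ≤ k + 1` (one-indexed; zero-indexed
`m - 2k ≤ (a:ℕ) ≤ k` for the leftmost winner `a`), then it is Gehrlein-stable. -/
theorem central_adjacent_winning_set_gehrlein_stable {m N : ℕ}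
    (P : Fin N → Fin m → Fin m → Prop) [∀ v a b, Decidable (P v a b)]
    (hP : StrictPrefs P) (hSP : SinglePeaked P) (hN : Odd N)
    (k : ℕ) (hk : (m + 2) / 3 ≤ k)
    (W : Finset (Fin m)) (hWwin : IsWinningSet P k W)
    (a : Fin m)
    (hWa : ∀ x : Fin m, x ∈ W ↔ (a : ℕ) ≤ (x : ℕ) ∧ (x : ℕ) < (a : ℕ) + k)
    (hlo : m - 2 * k ≤ (a : ℕ)) (hhi : (a : ℕ) ≤ k) :
    ∀ w ∈ W, ∀ c ∉ W, Defeats P w c :=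
  central_adjacent_winning_set_gehrlein_stable_general P hP hSP k W hWwin a hWa hlo hhi
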